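/- Let A be a graded ring and suppose the right ideal A_+ is generated (as a right ideal) by homogeneous elements b_1, …, b_m of positive degrees; set N = max(deg b_1, …, deg b_m). Then for every n ≥ 1 one has A_{≥Nn} ⊆ (A_+)^n; equivalently, every homogeneous element of A of degree ≥ N·n is a finite sum of products x_1·x_2·⋯·x_n in which every factor x_i is homogeneous of positive degree. (The key inclusion underlying Proposition 3.4 and Corollary 3.5.) -/

import Mathlib

/-!
Induction on `n`. An element `x ∈ A_{≥ N(n+1)}` is the sum of its components `x_k`, `k ≥ N(n+1)`.
Writing `x = ∑ b_i r_i` and taking the degree-`k` part gives `x_k = ∑ b_i (r_i)_{k - deg b_i}`,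
and since `deg b_i ≤ N` each `(r_i)_{k - deg b_i}` lies in `A_{≥ Nn} ⊆ (A_+)^n`.
-/

/-- The product `I·J` of two subsets of `A`: the additive span of the products
`x * y` with `x ∈ I`, `y ∈ J`. -/
def setIdealMul {A : Type*} [Ring A] (I J : Set A) : Set A :=
  (AddSubgroup.closure {z : A | ∃ x ∈ I, ∃ y ∈ J, z = x * y} : AddSubgroup A)

/-- The `n`-th power of an ideal (as a set); the `0`-th power is `A` itself. -/
def setIdealPow {A : Type*} [Ring A] (I : Set A) : ℕ → Set A
  | 0 => Set.univ
  | n + 1 => setIdealMul I (setIdealPow I n)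

/-- The tail `A_{≥ n}`: elements all of whose homogeneous components have
degree `≥ n`.  `A_+ = A_{≥ 1}`. -/
def geIdeal {A : Type*} [Ring A] (𝒜 : ℕ → AddSubgroup A) [GradedRing 𝒜]
    (n : ℕ) : Set A :=
  {x : A | ∀ m : ℕ, m < n → ((DirectSum.decompose 𝒜 x m : 𝒜 m) : A) = 0}

/-- The right ideal of `A` generated by a set `s`. -/
def rightIdealSpan {A : Type*} [Ring A] (s : Set A) : Set A :=
  (AddSubgroup.closure {y : A | ∃ a ∈ s, ∃ r : A, y = a * r} : AddSubgroup A)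

open DirectSum

section

variable {A : Type*} [Ring A]

lemma subset_rightIdealSpan (s : Set A) : s ⊆ rightIdealSpan s :=
  fun a ha => AddSubgroup.subset_closure ⟨a, ha, 1, (mul_one a).symm⟩

lemma setIdealMul_mono {I I' J J' : Set A} (hI : I ⊆ I') (hJ : J ⊆ J') :
    setIdealMul I J ⊆ setIdealMul I' J' :=
  AddSubgroup.closure_mono fun _ ⟨x, hx, y, hy, hz⟩ => ⟨x, hI hx, y, hJ hy, hz⟩

variable {𝒜 : ℕ → AddSubgroup A} [GradedRing 𝒜]

lemma geIdeal_antitone : Antitone (geIdeal 𝒜) :=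
  fun _ _ h _ hx m hm => hx m (lt_of_lt_of_le hm h)

lemma mem_geIdeal_of_mem {a : A} {e K : ℕ} (ha : a ∈ 𝒜 e) (hK : K ≤ e) : a ∈ geIdeal 𝒜 K :=
  fun _ hm => decompose_of_mem_ne 𝒜 ha (by omega)

lemma mem_of_decompose_mem_of_mem_geIdeal {T : AddSubgroup A} {K : ℕ} {x : A}
    (hx : x ∈ geIdeal 𝒜 K) (hT : ∀ k, K ≤ k → (decompose 𝒜 x k : A) ∈ T) : x ∈ T := by
  classical
  rw [← sum_support_decompose 𝒜 x]
  refine T.sum_mem fun k _ => ?_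
  by_cases hk : K ≤ k
  · exact hT k hk
  · rw [hx k (by omega)]
    exact T.zero_mem

lemma decompose_mem_setIdealMul_of_mem_rightIdealSpan {ι : Type*} {b : ι → A} {d : ι → ℕ}
    {N : ℕ} (hb : ∀ i, b i ∈ 𝒜 (d i)) (hdN : ∀ i, d i ≤ N) {y : A}
    (hy : y ∈ rightIdealSpan (Set.range b)) (k : ℕ) :
    (decompose 𝒜 y k : A) ∈ setIdealMul (Set.range b) (geIdeal 𝒜 (k - N)) := by
  let T : AddSubgroup A := AddSubgroup.closure
    {z : A | ∃ x ∈ Set.range b, ∃ y ∈ geIdeal 𝒜 (k - N), z = x * y}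
  change (decompose 𝒜 y k : A) ∈ T
  induction hy using AddSubgroup.closure_induction with
  | mem _ hz =>
    obtain ⟨_, ⟨i, rfl⟩, r, rfl⟩ := hz
    by_cases hik : d i ≤ k
    · rw [coe_decompose_mul_of_left_mem_of_le 𝒜 (hb i) hik]
      exact AddSubgroup.subset_closure ⟨b i, ⟨i, rfl⟩, _,
        mem_geIdeal_of_mem (SetLike.coe_mem _) (by have := hdN i; omega), rfl⟩
    · rw [coe_decompose_mul_of_left_mem_of_not_le 𝒜 (hb i) hik]
      exact T.zero_mem
  | zero => simp
  | add _ _ _ _ hu hv => rw [decompose_add]; exact T.add_mem hu hv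
  | neg _ _ hu => rw [decompose_neg]; exact T.neg_mem hu

theorem geIdeal_mul_subset_setIdealPow {ι : Type*} {b : ι → A} {d : ι → ℕ} {N : ℕ}
    (hN : 1 ≤ N) (hb : ∀ i, b i ∈ 𝒜 (d i)) (hdN : ∀ i, d i ≤ N)
    (hgen : geIdeal 𝒜 1 = rightIdealSpan (Set.range b)) :
    ∀ n, geIdeal 𝒜 (N * n) ⊆ setIdealPow (geIdeal 𝒜 1) n
  | 0 => Set.subset_univ _
  | n + 1 => fun x hx => by
    have hx_span : x ∈ rightIdealSpan (Set.range b) :=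
      hgen ▸ geIdeal_antitone (by nlinarith) hx
    have hb_mem : Set.range b ⊆ geIdeal 𝒜 1 := hgen ▸ subset_rightIdealSpan _
    refine mem_of_decompose_mem_of_mem_geIdeal (T := AddSubgroup.closure _) hx fun k hk => ?_
    refine setIdealMul_mono hb_mem (fun y hy => ?_)
      (decompose_mem_setIdealMul_of_mem_rightIdealSpan hb hdN hx_span k)
    exact geIdeal_mul_subset_setIdealPow hN hb hdN hgen n
      (geIdeal_antitone (by rw [Nat.mul_succ] at hk; omega) hy)

end

/-- The key inclusion `A_{≥ N·n} ⊆ (A_+)^n` for `n ≥ 1`. -/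
theorem geIdeal_subset_pow_irrelevant {A : Type*} [Ring A] (𝒜 : ℕ → AddSubgroup A)
    [GradedRing 𝒜] (m : ℕ) (hm : 0 < m) (b : Fin m → A) (d : Fin m → ℕ)
    (hd : ∀ i, 0 < d i) (hb : ∀ i, b i ∈ 𝒜 (d i))
    (hgen : geIdeal 𝒜 1 = rightIdealSpan (Set.range b)) :
    ∀ n : ℕ, 1 ≤ n →
      geIdeal 𝒜 (Finset.univ.sup d * n) ⊆ setIdealPow (geIdeal 𝒜 1) n := by
  have hdN : ∀ i, d i ≤ Finset.univ.sup d := fun i => Finset.le_sup (Finset.mem_univ i)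
  have hN : 1 ≤ Finset.univ.sup d := (hd ⟨0, hm⟩).trans_le (hdN _)
  exact fun n _ => geIdeal_mul_subset_setIdealPow hN hb hdN hgen n
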